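/- Let (X,d) be a complete regular semimetric space and φ : ℝ₊ → ℝ₊ a comparison function. Then every φ-contraction T : X → X has a unique fixed point. Moreover, for any starting point p ∈ X, the sequence of iterates (Tⁿp) converges to this fixed point. -/

import Mathlib

open Filter Topology

/-- A semimetric on `X`: a symmetric nonnegative function vanishing exactly on the diagonal. -/
def IsSemimetric {X : Type*} (d : X → X → NNReal) : Prop :=
  (∀ x y, d x y = d y x) ∧ (∀ x y, d x y = 0 ↔ x = y)

/-- The basic triangle function `Φ_d(u,v) = sup { d x y | ∃ p, d p x ≤ u ∧ d p y ≤ v }`. -/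
noncomputable def basicTriangle {X : Type*} (d : X → X → NNReal) (u v : ENNReal) : ENNReal :=
  sSup {w : ENNReal | ∃ x y p : X, w = (d x y : ENNReal) ∧ (d p x : ENNReal) ≤ u ∧ (d p y : ENNReal) ≤ v}

/-- `Φ` is a triangle function for `d`: symmetric, monotone increasing in both arguments,
`Φ(0,0) = 0`, and the generalized triangle inequality holds. -/
def IsTriangleFun {X : Type*} (d : X → X → NNReal) (Φ : ENNReal → ENNReal → ENNReal) : Prop :=
  (∀ u v, Φ u v = Φ v u) ∧
  (∀ v, Monotone fun u => Φ u v) ∧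
  (∀ u, Monotone fun v => Φ u v) ∧
  Φ 0 0 = 0 ∧
  ∀ x y z : X, (d x y : ENNReal) ≤ Φ (d x z) (d y z)

/-- A semimetric is regular if its basic triangle function is continuous at the origin. -/
def IsRegularSemimetric {X : Type*} (d : X → X → NNReal) : Prop :=
  ContinuousAt (fun p : ENNReal × ENNReal => basicTriangle d p.1 p.2) (0, 0)

/-- Convergence of a sequence with respect to a semimetric. -/
def SConv {X : Type*} (d : X → X → NNReal) (x : ℕ → X) (a : X) : Prop :=
  Tendsto (fun n => d (x n) a) atTop (𝓝 0)

/-- Cauchy property of a sequence with respect to a semimetric. -/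
def SCauchy {X : Type*} (d : X → X → NNReal) (x : ℕ → X) : Prop :=
  ∀ ε : NNReal, 0 < ε → ∃ N, ∀ n m, N ≤ n → N ≤ m → d (x n) (x m) < ε

/-- Completeness of a semimetric space: every Cauchy sequence converges. -/
def SComplete {X : Type*} (d : X → X → NNReal) : Prop :=
  ∀ x : ℕ → X, SCauchy d x → ∃ a, SConv d x a

/-- The smallest Lipschitz modulus `L_{d₁,d₂}(t) = sup { d₁ x y | d₂ x y ≤ t }`. -/
noncomputable def Lmod {X : Type*} (d₁ d₂ : X → X → NNReal) (t : ENNReal) : ENNReal :=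
  sSup {w : ENNReal | ∃ x y : X, w = (d₁ x y : ENNReal) ∧ (d₂ x y : ENNReal) ≤ t}

/-- Equivalence of semimetrics: both minimal Lipschitz moduli tend to `0` at `0⁺`. -/
def SEquiv {X : Type*} (d₁ d₂ : X → X → NNReal) : Prop :=
  Tendsto (Lmod d₁ d₂) (𝓝[>] (0 : ENNReal)) (𝓝 0) ∧
  Tendsto (Lmod d₂ d₁) (𝓝[>] (0 : ENNReal)) (𝓝 0)

/-- A comparison function: monotone increasing with iterates tending to zero pointwise. -/
def IsComparison (φ : NNReal → NNReal) : Prop :=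
  Monotone φ ∧ ∀ t : NNReal, Tendsto (fun n => φ^[n] t) atTop (𝓝 0)

/-- `T` is a `φ`-contraction with respect to the semimetric `d`. -/
def IsPhiContraction {X : Type*} (d : X → X → NNReal) (φ : NNReal → NNReal) (T : X → X) : Prop :=
  ∀ x y, d (T x) (T y) ≤ φ (d x y)


/-!
Regularity replaces the triangle inequality: for every `ε > 0` there is `δ > 0` such that two
points `δ`-close to a common point are `ε`-close. Pick `j ≥ 1` with `φʲ ε ≤ δ` and `N` so large
that `Tᴺ p` is `δ`-close to `Tᴺ⁺ʳ p` for `r ≤ j`; an induction in steps of `j` then keeps the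
whole tail `(Tᴺ⁺ᵐ p)` within `ε` of `Tᴺ p`, and contracting this by `Tᵏ` shows that orbits are
Cauchy. Limits are unique by regularity again, `T` maps the limit of an orbit to the limit of the
shifted orbit since `φ t ≤ t`, and two fixed points `x, y` satisfy `d x y ≤ φⁿ (d x y) → 0`.
-/

open Function

namespace IsSemimetric

variable {X : Type*} {d : X → X → NNReal}

theorem basicTriangle_zero_zero (hd : IsSemimetric d) : basicTriangle d 0 0 = 0 := by
  refine le_antisymm (sSup_le ?_) zero_le
  rintro w ⟨x, y, p, rfl, hx, hy⟩
  obtain rfl : p = x := (hd.2 p x).mp (by exact_mod_cast nonpos_iff_eq_zero.mp hx)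
  obtain rfl : p = y := (hd.2 p y).mp (by exact_mod_cast nonpos_iff_eq_zero.mp hy)
  simp [(hd.2 p p).mpr rfl]

end IsSemimetric

theorem le_basicTriangle {X : Type*} {d : X → X → NNReal} {p x y : X} {u v : ENNReal}
    (hx : (d p x : ENNReal) ≤ u) (hy : (d p y : ENNReal) ≤ v) :
    (d x y : ENNReal) ≤ basicTriangle d u v :=
  le_sSup ⟨x, y, p, rfl, hx, hy⟩

namespace IsRegularSemimetric

variable {X : Type*} {d : X → X → NNReal}

theorem tendsto_basicTriangle (hreg : IsRegularSemimetric d) (hd : IsSemimetric d)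
    {α : Type*} {l : Filter α} {u v : α → NNReal}
    (hu : Tendsto u l (𝓝 0)) (hv : Tendsto v l (𝓝 0)) :
    Tendsto (fun a => basicTriangle d (u a) (v a)) l (𝓝 0) := by
  have h := hreg.tendsto
  rw [hd.basicTriangle_zero_zero] at h
  exact h.comp ((ENNReal.tendsto_coe.mpr hu).prodMk_nhds (ENNReal.tendsto_coe.mpr hv))

theorem exists_pos_forall_le_of_le_of_le (hreg : IsRegularSemimetric d) (hd : IsSemimetric d)
    {ε : NNReal} (hε : 0 < ε) :
    ∃ δ > 0, δ ≤ ε ∧ ∀ q x y, d q x ≤ δ → d q y ≤ δ → d x y ≤ ε := by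
  have hΦ : Tendsto (fun u : NNReal => basicTriangle d u u) (𝓝[>] 0) (𝓝 0) :=
    hreg.tendsto_basicTriangle hd nhdsWithin_le_nhds nhdsWithin_le_nhds
  obtain ⟨δ, hδε, hδ⟩ :=
    ((hΦ.eventually_lt_const (ENNReal.coe_pos.mpr hε)).and self_mem_nhdsWithin).exists
  refine ⟨min δ ε, lt_min hδ hε, min_le_right _ _, fun q x y hx hy => ?_⟩
  have hxy : (d x y : ENNReal) ≤ basicTriangle d δ δ :=
    le_basicTriangle (p := q) (by exact_mod_cast hx.trans (min_le_left _ _))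
      (by exact_mod_cast hy.trans (min_le_left _ _))
  exact_mod_cast (hxy.trans_lt hδε).le

theorem sConv_unique (hreg : IsRegularSemimetric d) (hd : IsSemimetric d) {x : ℕ → X} {a b : X}
    (ha : SConv d x a) (hb : SConv d x b) : a = b := by
  have hab : (d a b : ENNReal) ≤ 0 :=
    ge_of_tendsto' (hreg.tendsto_basicTriangle hd ha hb) fun n =>
      le_basicTriangle (p := x n) le_rfl le_rfl
  exact (hd.2 a b).mp (by exact_mod_cast nonpos_iff_eq_zero.mp hab)

end IsRegularSemimetric

namespace IsComparison

variable {φ : NNReal → NNReal}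

theorem eq_zero_of_le_apply (hφ : IsComparison φ) {t : NNReal} (ht : t ≤ φ t) : t = 0 :=
  nonpos_iff_eq_zero.mp <| ge_of_tendsto' (hφ.2 t) fun n =>
    hφ.1.monotone_iterate_of_le_map ht (Nat.zero_le n)

theorem apply_le (hφ : IsComparison φ) (t : NNReal) : φ t ≤ t := by
  by_contra! h
  have := hφ.eq_zero_of_le_apply (hφ.1 h.le)
  simp [this] at h

theorem iterate_apply_le (hφ : IsComparison φ) (n : ℕ) (t : NNReal) : φ^[n] t ≤ t := by
  simpa using hφ.1.iterate_le_of_le (g := id) hφ.apply_le n t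

end IsComparison

namespace IsPhiContraction

variable {X : Type*} {d : X → X → NNReal} {φ : NNReal → NNReal} {T : X → X}

theorem iterate (hT : IsPhiContraction d φ T) (hφ : Monotone φ) (n : ℕ) (x y : X) :
    d (T^[n] x) (T^[n] y) ≤ φ^[n] (d x y) := by
  induction n generalizing x y with
  | zero => simp
  | succ n ih =>
    simp only [iterate_succ_apply]
    exact (ih (T x) (T y)).trans (hφ.iterate n (hT x y))

theorem eq_of_isFixedPt (hT : IsPhiContraction d φ T) (hd : IsSemimetric d)
    (hφ : IsComparison φ) {x y : X} (hx : IsFixedPt T x) (hy : IsFixedPt T y) : x = y := by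
  have hxy : d x y ≤ 0 := ge_of_tendsto' (hφ.2 (d x y)) fun n => by
    simpa only [(hx.iterate n).eq, (hy.iterate n).eq] using hT.iterate hφ.1 n x y
  exact (hd.2 x y).mp (nonpos_iff_eq_zero.mp hxy)

theorem sConv_comp (hT : IsPhiContraction d φ T) (hφ : IsComparison φ) {x : ℕ → X} {a : X}
    (ha : SConv d x a) : SConv d (T ∘ x) (T a) :=
  tendsto_of_tendsto_of_tendsto_of_le_of_le tendsto_const_nhds ha (fun _ => zero_le)
    fun _ => (hT _ _).trans (hφ.apply_le _)

theorem isFixedPt_of_sConv_iterate (hT : IsPhiContraction d φ T) (hd : IsSemimetric d)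
    (hreg : IsRegularSemimetric d) (hφ : IsComparison φ) {p a : X}
    (ha : SConv d (fun n => T^[n] p) a) : IsFixedPt T a := by
  have hsucc : SConv d (fun n => T^[n + 1] p) a := (tendsto_add_atTop_iff_nat 1).mpr ha
  simp only [iterate_succ_apply'] at hsucc
  exact hreg.sConv_unique hd (hT.sConv_comp hφ ha) hsucc


theorem eventually_forall_le_iterate_add_le (hT : IsPhiContraction d φ T) (hφ : IsComparison φ)
    {δ : NNReal} (hδ : 0 < δ) (p : X) (j : ℕ) :
    ∀ᶠ N in atTop, ∀ r ≤ j, d (T^[N] p) (T^[N + r] p) ≤ δ := by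
  have hr : ∀ r, ∀ᶠ N in atTop, d (T^[N] p) (T^[N + r] p) ≤ δ := fun r => by
    filter_upwards [(hφ.2 (d p (T^[r] p))).eventually_lt_const hδ] with N hN
    rw [iterate_add_apply]
    exact (hT.iterate hφ.1 N p _).trans hN.le
  exact (Set.finite_Iic j).eventually_all.mpr fun r _ => hr r

/-- The induction step goes through `T^[N + j] p`, which is `δ`-close both to `T^[N] p` and,
by contraction, to `T^[N + m] p`. -/
theorem iterate_add_le (hT : IsPhiContraction d φ T) (hd : IsSemimetric d) (hφ : Monotone φ)
    {δ ε : NNReal} {j N : ℕ} {p : X}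
    (hball : ∀ q x y, d q x ≤ δ → d q y ≤ δ → d x y ≤ ε) (hδε : δ ≤ ε)
    (hj : 0 < j) (hjδ : φ^[j] ε ≤ δ) (hN : ∀ r ≤ j, d (T^[N] p) (T^[N + r] p) ≤ δ) (m : ℕ) :
    d (T^[N] p) (T^[N + m] p) ≤ ε := by
  induction m using Nat.strong_induction_on with
  | _ m ih =>
    rcases le_or_gt m j with hm | hm
    · exact (hN m hm).trans hδε
    obtain ⟨k, rfl⟩ := Nat.exists_eq_add_of_le hm.le
    have hfar : d (T^[N + j] p) (T^[N + (j + k)] p) ≤ δ := by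
      rw [show N + (j + k) = j + (N + k) by omega, add_comm N j, iterate_add_apply,
        iterate_add_apply]
      exact (hT.iterate hφ j _ _).trans ((hφ.iterate j (ih k (by omega))).trans hjδ)
    exact hball _ _ _ ((hd.1 _ _).trans_le (hN j le_rfl)) hfar

theorem exists_forall_iterate_add_add_le (hT : IsPhiContraction d φ T) (hd : IsSemimetric d)
    (hreg : IsRegularSemimetric d) (hφ : IsComparison φ) (p : X) {ε : NNReal} (hε : 0 < ε) :
    ∃ N, ∀ k l, d (T^[N + k] p) (T^[N + k + l] p) ≤ ε := by
  obtain ⟨δ, hδ, hδε, hball⟩ := hreg.exists_pos_forall_le_of_le_of_le hd hε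
  obtain ⟨j, hjδ, hj⟩ := (((hφ.2 ε).eventually_lt_const hδ).and (eventually_gt_atTop 0)).exists
  obtain ⟨N, hN⟩ := (hT.eventually_forall_le_iterate_add_le hφ hδ p j).exists
  refine ⟨N, fun k l => ?_⟩
  rw [add_comm N k, add_assoc, iterate_add_apply, iterate_add_apply]
  calc d (T^[k] (T^[N] p)) (T^[k] (T^[N + l] p))
      ≤ φ^[k] (d (T^[N] p) (T^[N + l] p)) := hT.iterate hφ.1 k _ _
    _ ≤ φ^[k] ε := hφ.1.iterate k (hT.iterate_add_le hd hφ.1 hball hδε hj hjδ.le hN l)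
    _ ≤ ε := hφ.iterate_apply_le k ε

theorem sCauchy_iterate (hT : IsPhiContraction d φ T) (hd : IsSemimetric d)
    (hreg : IsRegularSemimetric d) (hφ : IsComparison φ) (p : X) :
    SCauchy d (fun n => T^[n] p) := by
  intro ε hε
  obtain ⟨N, hN⟩ := hT.exists_forall_iterate_add_add_le hd hreg hφ p (half_pos hε)
  refine ⟨N, fun n m hn hm => ?_⟩
  wlog hnm : n ≤ m generalizing n m
  · rw [hd.1]
    exact this m n hm hn (le_of_not_ge hnm)
  obtain ⟨k, rfl⟩ := Nat.exists_eq_add_of_le hn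
  obtain ⟨l, rfl⟩ := Nat.exists_eq_add_of_le hnm
  exact (hN k l).trans_lt (half_lt_self hε)

theorem exists_sConv_iterate_isFixedPt (hT : IsPhiContraction d φ T) (hd : IsSemimetric d)
    (hreg : IsRegularSemimetric d) (hcomp : SComplete d) (hφ : IsComparison φ) (p : X) :
    ∃ a, SConv d (fun n => T^[n] p) a ∧ IsFixedPt T a := by
  obtain ⟨a, ha⟩ := hcomp _ (hT.sCauchy_iterate hd hreg hφ p)
  exact ⟨a, ha, hT.isFixedPt_of_sConv_iterate hd hreg hφ ha⟩

end IsPhiContraction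

theorem matkowski_semimetric {X : Type*} [Nonempty X]
    (d : X → X → NNReal) (hd : IsSemimetric d)
    (hreg : IsRegularSemimetric d) (hcomp : SComplete d)
    (φ : NNReal → NNReal) (hφ : IsComparison φ)
    (T : X → X) (hT : IsPhiContraction d φ T) :
    ∃ x₀ : X, T x₀ = x₀ ∧ (∀ y, T y = y → y = x₀) ∧
      ∀ p : X, SConv d (fun n => T^[n] p) x₀ := by
  obtain ⟨x₀, -, hx₀⟩ :=
    hT.exists_sConv_iterate_isFixedPt hd hreg hcomp hφ (Classical.arbitrary X)
  refine ⟨x₀, hx₀, fun y hy => hT.eq_of_isFixedPt hd hφ hy hx₀, fun p => ?_⟩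
  obtain ⟨a, ha, hfix⟩ := hT.exists_sConv_iterate_isFixedPt hd hreg hcomp hφ p
  rwa [hT.eq_of_isFixedPt hd hφ hfix hx₀] at ha
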